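/- Reversibility of the index-augmented merge step: let p be a natural number (the pivot), and let l₁ and l₂ be lists of pairs (v, i) of natural numbers, each strictly sorted in increasing order of the first component v, such that all first components occurring in l₁ ++ l₂ are pairwise distinct, every pair in l₁ has second component i < p, and every pair in l₂ has second component i ≥ p. Then for any list m that is a permutation of l₁ ++ l₂ and is sorted in increasing order of the first component, filtering m by the predicate (i < p) on the second component yields exactly l₁, and filtering m by (i ≥ p) yields exactly l₂. Consequently the sorted merged list m together with p uniquely determines the input pair (l₁, l₂), so merging is injective (reversible) on such inputs. -/

import Mathlib

/-! The merged list `m` is sorted, hence so is each of its filters; filtering the permutation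
`m ~ l₁ ++ l₂` by index `< p` (resp. `≥ p`) leaves a permutation of `l₁` (resp. `l₂`), and two
lists that are permutations of each other and strictly sorted by the same relation coincide. -/

namespace List

variable {α : Type*} {q : α → Bool}

theorem filter_append_eq_left {l₁ l₂ : List α} (h₁ : ∀ x ∈ l₁, q x) (h₂ : ∀ x ∈ l₂, ¬q x) :
    (l₁ ++ l₂).filter q = l₁ := by
  rw [filter_append, filter_eq_self.mpr h₁, filter_eq_nil_iff.mpr h₂, append_nil]

theorem filter_append_eq_right {l₁ l₂ : List α} (h₁ : ∀ x ∈ l₁, ¬q x) (h₂ : ∀ x ∈ l₂, q x) :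
    (l₁ ++ l₂).filter q = l₂ := by
  rw [filter_append, filter_eq_nil_iff.mpr h₁, filter_eq_self.mpr h₂, nil_append]

theorem Perm.filter_eq_of_pairwise {r : α → α → Prop} (hr : ∀ a b, r a b → ¬r b a)
    {m l l' : List α} (hperm : m ~ l) (hm : m.Pairwise r) (hl' : l'.Pairwise r)
    (hfilter : l.filter q = l') : m.filter q = l' :=
  (hfilter ▸ hperm.filter q).eq_of_pairwise (fun a b _ _ hab hba => absurd hba (hr a b hab))
    (hm.filter q) hl'

end List

theorem merge_step_reversible_general (p : ℕ) (l₁ l₂ m : List (ℕ × ℕ))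
    (h₁ : List.Pairwise (fun a b : ℕ × ℕ => a.1 < b.1) l₁)
    (h₂ : List.Pairwise (fun a b : ℕ × ℕ => a.1 < b.1) l₂)
    (hi₁ : ∀ x ∈ l₁, x.2 < p)
    (hi₂ : ∀ x ∈ l₂, p ≤ x.2)
    (hperm : m.Perm (l₁ ++ l₂))
    (hm : List.Pairwise (fun a b : ℕ × ℕ => a.1 < b.1) m) :
    m.filter (fun x => x.2 < p) = l₁ ∧ m.filter (fun x => p ≤ x.2) = l₂ := by
  have hasymm : ∀ a b : ℕ × ℕ, a.1 < b.1 → ¬b.1 < a.1 := fun _ _ h => h.asymm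
  have hsplit₁ : (l₁ ++ l₂).filter (fun x => x.2 < p) = l₁ :=
    List.filter_append_eq_left (by simpa using hi₁) (by simpa using hi₂)
  have hsplit₂ : (l₁ ++ l₂).filter (fun x => p ≤ x.2) = l₂ :=
    List.filter_append_eq_right (by simpa using hi₁) (by simpa using hi₂)
  exact ⟨hperm.filter_eq_of_pairwise hasymm hm h₁ hsplit₁,
    hperm.filter_eq_of_pairwise hasymm hm h₂ hsplit₂⟩

/-- Reversibility of the index-augmented merge step: if `l₁` and `l₂` are lists of
(value, index) pairs, each strictly sorted by value, with pairwise-distinct values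
overall, all indices in `l₁` below the pivot `p` and all indices in `l₂` at least `p`,
then any sorted permutation `m` of `l₁ ++ l₂` determines `l₁` and `l₂`: filtering `m`
by index `< p` yields exactly `l₁`, and filtering by index `≥ p` yields exactly `l₂`. -/
theorem merge_step_reversible (p : ℕ) (l₁ l₂ m : List (ℕ × ℕ))
    (h₁ : List.Pairwise (fun a b : ℕ × ℕ => a.1 < b.1) l₁)
    (h₂ : List.Pairwise (fun a b : ℕ × ℕ => a.1 < b.1) l₂)
    (hnodup : ((l₁ ++ l₂).map Prod.fst).Nodup)
    (hi₁ : ∀ x ∈ l₁, x.2 < p)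
    (hi₂ : ∀ x ∈ l₂, p ≤ x.2)
    (hperm : m.Perm (l₁ ++ l₂))
    (hm : List.Pairwise (fun a b : ℕ × ℕ => a.1 < b.1) m) :
    m.filter (fun x => x.2 < p) = l₁ ∧ m.filter (fun x => p ≤ x.2) = l₂ :=
  merge_step_reversible_general p l₁ l₂ m h₁ h₂ hi₁ hi₂ hperm hm
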